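/- arXiv:2011.04026 — 4 statements merged into one kernel-verified Lean document; each statement's English description precedes it below -/
import Mathlib

section
/- Let X ⊂ ℝ^d be compact and k a continuous kernel such that samples of f ~ GP(0, k) are almost surely continuous. Let f̃ be another almost-surely-continuous centered Gaussian process, and define pathwise posteriors (f|y)(·) = f(·) + k(·, X_n) K_{n,n}⁻¹ (y − f(X_n)) and similarly (f̃|y). Then for any coupling of f̃ and f, pointwise |(f̃|y)(x) − (f|y)(x)|² ≤ 2(1 + ‖k‖²_{C(X²)} ‖K_{n,n}⁻¹‖²_{L(ℓ^∞;ℓ¹)}) ‖f̃ − f‖²_{C(X)} for all x ∈ X. -/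
open MeasureTheory ProbabilityTheory Matrix

def IsCenteredGP {X Ω : Type*} [MeasurableSpace Ω] (P : Measure Ω)
    (f : X → Ω → ℝ) (k : X → X → ℝ) : Prop :=
  ∀ (N : ℕ) (x : Fin N → X) (c : Fin N → ℝ),
    P.map (fun ω => ∑ i, c i * f (x i) ω)
      = gaussianReal 0 (Real.toNNReal (∑ i, ∑ j, c i * c j * k (x i) (x j)))

/-!
The two pathwise posteriors apply the same affine update to different prior samples, so their
gap is the update applied to the difference `g = f̃ - f` of the samples:
`g x - k(x, Xₙ) K⁻¹ g(Xₙ)`. The first term is at most `‖g‖_{C(X)}`, the second at most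
`‖k‖_{C(X²)} ‖K⁻¹‖_{L(ℓ∞;ℓ¹)} ‖g‖_{C(X)}`, and `(a - b)² ≤ 2a² + 2b²` combines them.
-/

theorem le_ciSup_of_continuous {α : Type*} [TopologicalSpace α] [CompactSpace α]
    {g : α → ℝ} (hg : Continuous g) (a : α) : g a ≤ ⨆ a, g a :=
  le_ciSup (isCompact_range hg).bddAbove a

namespace Matrix

variable {m n : Type*} [Fintype m] [Fintype n]

noncomputable def linftyToL1Norm (A : Matrix m n ℝ) : ℝ :=
  ⨆ v : {v : n → ℝ // ∀ j, |v j| ≤ 1}, ∑ i, |(A *ᵥ v.1) i|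

theorem bddAbove_range_sum_abs_mulVec (A : Matrix m n ℝ) :
    BddAbove (Set.range fun v : {v : n → ℝ // ∀ j, |v j| ≤ 1} => ∑ i, |(A *ᵥ v.1) i|) := by
  refine ⟨∑ i, ∑ j, |A i j|, ?_⟩
  rintro _ ⟨⟨v, hv⟩, rfl⟩
  refine Finset.sum_le_sum fun i _ => (Finset.abs_sum_le_sum_abs _ _).trans ?_
  refine Finset.sum_le_sum fun j _ => ?_
  rw [abs_mul]
  exact mul_le_of_le_one_right (abs_nonneg _) (hv j)

theorem sum_abs_mulVec_le_linftyToL1Norm (A : Matrix m n ℝ) {v : n → ℝ}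
    (hv : ∀ j, |v j| ≤ 1) : ∑ i, |(A *ᵥ v) i| ≤ A.linftyToL1Norm :=
  le_ciSup (bddAbove_range_sum_abs_mulVec A) ⟨v, hv⟩

theorem sum_abs_mulVec_le (A : Matrix m n ℝ) {v : n → ℝ} {S : ℝ} (hS : 0 ≤ S)
    (hv : ∀ j, |v j| ≤ S) : ∑ i, |(A *ᵥ v) i| ≤ A.linftyToL1Norm * S := by
  rcases hS.eq_or_lt with rfl | hS
  · have hv0 : v = 0 := funext fun j => abs_nonpos_iff.mp (hv j)
    simp [hv0]
  have hw : ∀ j, |(S⁻¹ • v) j| ≤ 1 := fun j => by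
    rw [Pi.smul_apply, smul_eq_mul, abs_mul, abs_inv, abs_of_pos hS, inv_mul_le_iff₀ hS, mul_one]
    exact hv j
  have hAv : A *ᵥ v = S • A *ᵥ (S⁻¹ • v) := by
    rw [mulVec_smul, smul_smul, mul_inv_cancel₀ hS.ne', one_smul]
  calc ∑ i, |(A *ᵥ v) i| = S * ∑ i, |(A *ᵥ (S⁻¹ • v)) i| := by
        simp only [hAv, Finset.mul_sum, Pi.smul_apply, smul_eq_mul, abs_mul, abs_of_pos hS]
    _ ≤ S * A.linftyToL1Norm := by gcongr; exact A.sum_abs_mulVec_le_linftyToL1Norm hw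
    _ = A.linftyToL1Norm * S := mul_comm _ _

end Matrix

theorem abs_dotProduct_le {ι : Type*} [Fintype ι] {c u : ι → ℝ} {C : ℝ}
    (hc : ∀ i, |c i| ≤ C) : |c ⬝ᵥ u| ≤ C * ∑ i, |u i| := by
  rw [Finset.mul_sum]
  refine (Finset.abs_sum_le_sum_abs _ _).trans (Finset.sum_le_sum fun i _ => ?_)
  rw [abs_mul]
  exact mul_le_mul_of_nonneg_right (hc i) (abs_nonneg _)

theorem pathwise_update_sub {m n : Type*} [Fintype m] [Fintype n]
    (A : Matrix m n ℝ) (c : m → ℝ) (y u w : n → ℝ) (a b : ℝ) :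
    (a + c ⬝ᵥ A *ᵥ (y - u)) - (b + c ⬝ᵥ A *ᵥ (y - w)) = (a - b) - c ⬝ᵥ A *ᵥ (u - w) := by
  simp only [mulVec_sub, dotProduct_sub]
  ring

theorem sq_sub_dotProduct_mulVec_le {m n : Type*} [Fintype m] [Fintype n]
    (A : Matrix m n ℝ) {c : m → ℝ} {v : n → ℝ} {a C S : ℝ} (hC : 0 ≤ C)
    (ha : |a| ≤ S) (hc : ∀ i, |c i| ≤ C) (hv : ∀ j, |v j| ≤ S) :
    (a - c ⬝ᵥ A *ᵥ v) ^ 2 ≤ 2 * (1 + C ^ 2 * A.linftyToL1Norm ^ 2) * S ^ 2 := by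
  have hS : 0 ≤ S := (abs_nonneg a).trans ha
  have hb : |c ⬝ᵥ A *ᵥ v| ≤ C * (A.linftyToL1Norm * S) :=
    (abs_dotProduct_le hc).trans (by gcongr; exact A.sum_abs_mulVec_le hS hv)
  have ha2 := sq_le_sq' (abs_le.mp ha).1 (abs_le.mp ha).2
  have hb2 := sq_le_sq' (abs_le.mp hb).1 (abs_le.mp hb).2
  calc (a - c ⬝ᵥ A *ᵥ v) ^ 2 ≤ 2 * (a ^ 2 + (c ⬝ᵥ A *ᵥ v) ^ 2) := by
        simpa [sub_eq_add_neg] using add_sq_le (a := a) (b := -(c ⬝ᵥ A *ᵥ v))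
    _ ≤ 2 * (S ^ 2 + (C * (A.linftyToL1Norm * S)) ^ 2) := by linarith
    _ = 2 * (1 + C ^ 2 * A.linftyToL1Norm ^ 2) * S ^ 2 := by ring

theorem pathwise_posterior_pointwise_bound_general
    {d : ℕ} (X : Set (EuclideanSpace ℝ (Fin d))) (hX : IsCompact X)
    {Ω : Type*}
    (k : EuclideanSpace ℝ (Fin d) → EuclideanSpace ℝ (Fin d) → ℝ)
    (hkcont : Continuous fun p : EuclideanSpace ℝ (Fin d) × EuclideanSpace ℝ (Fin d) => k p.1 p.2)
    (f ftil : EuclideanSpace ℝ (Fin d) → Ω → ℝ)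
    (hfc : ∀ ω, Continuous fun x => f x ω) (hftc : ∀ ω, Continuous fun x => ftil x ω)
    {n : ℕ} (Xn : Fin n → EuclideanSpace ℝ (Fin d)) (hXn : ∀ j, Xn j ∈ X)
    (y : Fin n → ℝ)
    (K : Matrix (Fin n) (Fin n) ℝ)
    (kSup : ℝ) (hkSup : kSup = ⨆ p : X × X, |k p.1 p.2|)
    (opK : ℝ)
    (hopK : opK = ⨆ v : {v : Fin n → ℝ // ∀ i, |v i| ≤ 1}, ∑ i, |K⁻¹.mulVec v i|) :
    ∀ ω, ∀ x ∈ X,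
      ((ftil x ω + dotProduct (fun i => k x (Xn i))
            (K⁻¹.mulVec (y - fun j => ftil (Xn j) ω)))
        - (f x ω + dotProduct (fun i => k x (Xn i))
            (K⁻¹.mulVec (y - fun j => f (Xn j) ω)))) ^ 2
      ≤ 2 * (1 + kSup ^ 2 * opK ^ 2) * (⨆ x' : X, |ftil x' ω - f x' ω|) ^ 2 := by
  intro ω x hx
  have : CompactSpace X := isCompact_iff_compactSpace.mp hX
  have hgap : ∀ z (hz : z ∈ X), |ftil z ω - f z ω| ≤ ⨆ x' : X, |ftil x' ω - f x' ω| :=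
    fun z hz => le_ciSup_of_continuous (g := fun x' : X => |ftil x' ω - f x' ω|)
      (((hftc ω).sub (hfc ω)).abs.comp continuous_subtype_val) ⟨z, hz⟩
  have hk : ∀ z (hz : z ∈ X), |k x z| ≤ kSup := fun z hz =>
    hkSup ▸ le_ciSup_of_continuous (g := fun p : X × X => |k p.1 p.2|)
      (hkcont.comp (continuous_subtype_val.prodMap continuous_subtype_val)).abs (⟨x, hx⟩, ⟨z, hz⟩)
  rw [pathwise_update_sub, hopK]
  exact sq_sub_dotProduct_mulVec_le K⁻¹ ((abs_nonneg _).trans (hk x hx)) (hgap x hx)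
    (fun i => hk (Xn i) (hXn i)) (fun j => hgap (Xn j) (hXn j))

/-- **Pointwise error bound for pathwise posteriors.** For any coupling (common probability
space) of the processes `f̃` and `f`, the squared pointwise gap between the pathwise
posteriors is bounded by
`2 (1 + ‖k‖²_{C(X²)} ‖K⁻¹‖²_{L(ℓ∞;ℓ¹)}) ‖f̃ − f‖²_{C(X)}` at every `x ∈ X`. -/
theorem pathwise_posterior_pointwise_bound
    {d : ℕ} (X : Set (EuclideanSpace ℝ (Fin d))) (hX : IsCompact X)
    {Ω : Type*} [MeasurableSpace Ω] (P : Measure Ω) [IsProbabilityMeasure P]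
    (k : EuclideanSpace ℝ (Fin d) → EuclideanSpace ℝ (Fin d) → ℝ)
    (hkcont : Continuous fun p : EuclideanSpace ℝ (Fin d) × EuclideanSpace ℝ (Fin d) => k p.1 p.2)
    (f ftil : EuclideanSpace ℝ (Fin d) → Ω → ℝ)
    (hfmeas : ∀ x, Measurable (f x)) (hftmeas : ∀ x, Measurable (ftil x))
    (hgp : IsCenteredGP P f k)
    (ktil : EuclideanSpace ℝ (Fin d) → EuclideanSpace ℝ (Fin d) → ℝ)
    (hgptil : IsCenteredGP P ftil ktil)
    (hfc : ∀ ω, Continuous fun x => f x ω) (hftc : ∀ ω, Continuous fun x => ftil x ω)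
    {n : ℕ} (Xn : Fin n → EuclideanSpace ℝ (Fin d)) (hXn : ∀ j, Xn j ∈ X)
    (y : Fin n → ℝ)
    (K : Matrix (Fin n) (Fin n) ℝ) (hK : K = Matrix.of fun i j => k (Xn i) (Xn j))
    (hKdet : IsUnit K.det)
    (kSup : ℝ) (hkSup : kSup = ⨆ p : X × X, |k p.1 p.2|)
    (opK : ℝ)
    (hopK : opK = ⨆ v : {v : Fin n → ℝ // ∀ i, |v i| ≤ 1}, ∑ i, |K⁻¹.mulVec v i|) :
    ∀ ω, ∀ x ∈ X,
      ((ftil x ω + dotProduct (fun i => k x (Xn i))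
            (K⁻¹.mulVec (y - fun j => ftil (Xn j) ω)))
        - (f x ω + dotProduct (fun i => k x (Xn i))
            (K⁻¹.mulVec (y - fun j => f (Xn j) ω)))) ^ 2
      ≤ 2 * (1 + kSup ^ 2 * opK ^ 2) * (⨆ x' : X, |ftil x' ω - f x' ω|) ^ 2 :=
  pathwise_posterior_pointwise_bound_general X hX k hkcont f ftil hfc hftc Xn hXn y K kSup hkSup opK
    hopK
end

section
/- Let X ⊆ M be compact, k a kernel with RKHS H_k, and φ₁,…,φ_ℓ functions each lying locally in H_k on X (i.e., each agrees on X with some ψ_i ∈ H_k). Let f̃(·) = Σ_i w_i φ_i(·) with i.i.d. w_i ~ N(0,1), and let k^{(f|y)}(x,x) = k(x,x) − k(x,X_n)K_{n,n}⁻¹k(X_n,x) be the true noise-free posterior variance. If sup_{x∈X} k^{(f|y)}(x,x) ≤ ε, then sup_{x∈X} k^{(f̃|y)}(x,x) ≤ C₄ ε, where C₄ = ℓ · max_i inf{‖ψ_i‖²_{H_k} : ψ_i|_X = φ_i|_X}. -/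
open Matrix
open scoped InnerProductSpace

/-! The pathwise update subtracts from each `φᵢ = ⟪ψᵢ, Kf ·⟫` its kernel interpolant at `X_n`,
so the residual `φᵢ(x) − ξ(x)ᵀφᵢ(X_n)` equals `⟪ψᵢ, r_x⟫` with
`r_x = Kf x − ∑ⱼ ξⱼ(x) Kf(x_j)`. Because `ξ(x)` solves the kernel system, `r_x` is orthogonal
to every `Kf(x_j)` and `‖r_x‖²` is the true posterior variance. Cauchy–Schwarz then bounds each
squared residual by `‖ψᵢ‖²` times that variance; take the infimum over the admissible `ψᵢ`
and sum over the `ℓ` basis functions. -/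

section PowerFunction

variable {H ι : Type*} [NormedAddCommGroup H] [InnerProductSpace ℝ H] [Fintype ι]
  {u : H} {e : ι → H} {c : ι → ℝ}

theorem inner_sub_sum_smul_eq_zero_of_gram_mulVec (hc : gram ℝ e *ᵥ c = fun j => ⟪e j, u⟫_ℝ)
    (j : ι) : ⟪e j, u - ∑ j', c j' • e j'⟫_ℝ = 0 := by
  have hj := congrFun hc j
  simp only [mulVec, dotProduct, gram_apply] at hj
  simp only [inner_sub_right, inner_sum, real_inner_smul_right, ← hj, mul_comm, sub_self]

theorem norm_sub_sum_smul_sq_of_gram_mulVec (hc : gram ℝ e *ᵥ c = fun j => ⟪e j, u⟫_ℝ) :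
    ‖u - ∑ j, c j • e j‖ ^ 2 = ⟪u, u⟫_ℝ - ∑ j, ⟪u, e j⟫_ℝ * c j := by
  have horth : ⟪u - ∑ j, c j • e j, ∑ j, c j • e j⟫_ℝ = 0 := by
    refine (inner_sum _ _ _).trans (Finset.sum_eq_zero fun j _ => ?_)
    rw [real_inner_smul_right, real_inner_comm, inner_sub_sum_smul_eq_zero_of_gram_mulVec hc,
      mul_zero]
  rw [← real_inner_self_eq_norm_sq, inner_sub_right, horth, sub_zero, inner_sub_left, sum_inner]
  simp only [real_inner_smul_left, real_inner_comm (e _), mul_comm]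

theorem sq_inner_sub_sum_le_of_gram_mulVec (hc : gram ℝ e *ᵥ c = fun j => ⟪e j, u⟫_ℝ) (ψ : H) :
    (⟪ψ, u⟫_ℝ - ∑ j, c j * ⟪ψ, e j⟫_ℝ) ^ 2 ≤ ‖ψ‖ ^ 2 * (⟪u, u⟫_ℝ - ∑ j, ⟪u, e j⟫_ℝ * c j) := by
  have hresid : ⟪ψ, u⟫_ℝ - ∑ j, c j * ⟪ψ, e j⟫_ℝ = ⟪ψ, u - ∑ j, c j • e j⟫_ℝ := by
    simp only [inner_sub_right, inner_sum, real_inner_smul_right]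
  rw [hresid, ← norm_sub_sum_smul_sq_of_gram_mulVec hc, ← mul_pow, ← sq_abs]
  gcongr
  exact abs_real_inner_le_norm _ _

end PowerFunction

theorem Real.le_sInf_mul_of_forall_le_mul {s : Set ℝ} {a c : ℝ} (hs : s.Nonempty) (hc : 0 ≤ c)
    (h : ∀ r ∈ s, a ≤ r * c) : a ≤ sInf s * c := by
  rw [mul_comm, ← smul_eq_mul, ← Real.sInf_smul_of_nonneg hc]
  refine le_csInf hs.smul_set ?_
  rintro _ ⟨r, hr, rfl⟩
  simpa [mul_comm] using h r hr

theorem Real.sum_le_card_mul_iSup {ι : Type*} [Fintype ι] (f : ι → ℝ) :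
    ∑ i, f i ≤ Fintype.card ι * ⨆ i, f i := by
  simpa using Finset.sum_le_card_nsmul Finset.univ f _
    fun i _ => le_ciSup (Set.finite_range f).bddAbove i

theorem approximate_posterior_variance_contraction_general
    {M H : Type*} [NormedAddCommGroup H] [InnerProductSpace ℝ H]
    (X : Set M)
    (Kf : M → H) (k : M → M → ℝ)
    (hker : ∀ x x', k x x' = (inner ℝ (Kf x) (Kf x') : ℝ))
    {ℓ n : ℕ} (φ : Fin ℓ → M → ℝ)
    (hloc : ∀ i, ∃ ψ : H, ∀ x ∈ X, (inner ℝ ψ (Kf x) : ℝ) = φ i x)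
    (Xn : Fin n → M) (hXn : ∀ j, Xn j ∈ X)
    (K : Matrix (Fin n) (Fin n) ℝ) (hK : K = Matrix.of fun i j => k (Xn i) (Xn j))
    (hKdet : IsUnit K.det)
    (ξ : M → Fin n → ℝ) (hξ : ξ = fun x => K⁻¹.mulVec fun i => k (Xn i) x)
    (kpost : M → ℝ)
    (hkpost : kpost = fun x => k x x - ∑ i, k x (Xn i) * ξ x i)
    (ktilpost : M → ℝ)
    (hktilpost : ktilpost = fun x => ∑ i, (φ i x - ∑ j, ξ x j * φ i (Xn j)) ^ 2)
    (C₄ : ℝ)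
    (hC₄ : C₄ = (ℓ : ℝ) * ⨆ i : Fin ℓ,
      sInf {r : ℝ | ∃ ψ : H, (∀ x ∈ X, (inner ℝ ψ (Kf x) : ℝ) = φ i x) ∧ r = ‖ψ‖ ^ 2})
    (ε : ℝ) (hε : ∀ x ∈ X, kpost x ≤ ε) :
    ∀ x ∈ X, ktilpost x ≤ C₄ * ε := by
  intro x hx
  set S : Fin ℓ → Set ℝ := fun i =>
    {r : ℝ | ∃ ψ : H, (∀ y ∈ X, (inner ℝ ψ (Kf y) : ℝ) = φ i y) ∧ r = ‖ψ‖ ^ 2}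
  have hsolve : gram ℝ (Kf ∘ Xn) *ᵥ ξ x = fun j => ⟪(Kf ∘ Xn) j, Kf x⟫_ℝ := by
    have hgram : gram ℝ (Kf ∘ Xn) = K := by ext; simp [hK, hker]
    rw [hgram, hξ, mulVec_mulVec, mul_nonsing_inv _ hKdet, one_mulVec]
    simp [hker]
  have hpost : kpost x = ⟪Kf x, Kf x⟫_ℝ - ∑ j, ⟪Kf x, (Kf ∘ Xn) j⟫_ℝ * ξ x j := by
    simp [hkpost, hker]
  have hpost_nonneg : 0 ≤ kpost x := by
    rw [hpost, ← norm_sub_sum_smul_sq_of_gram_mulVec hsolve]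
    positivity
  have hresid (i : Fin ℓ) : (φ i x - ∑ j, ξ x j * φ i (Xn j)) ^ 2 ≤ sInf (S i) * ε := by
    obtain ⟨ψ₀, hψ₀⟩ := hloc i
    calc _ ≤ sInf (S i) * kpost x := by
          refine Real.le_sInf_mul_of_forall_le_mul ⟨_, ψ₀, hψ₀, rfl⟩ hpost_nonneg ?_
          rintro _ ⟨ψ, hψ, rfl⟩
          simpa only [hpost, Function.comp_apply, ← hψ x hx, ← hψ _ (hXn _)] using
            sq_inner_sub_sum_le_of_gram_mulVec hsolve ψ
      _ ≤ sInf (S i) * ε := by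
          gcongr
          · exact Real.sInf_nonneg (by rintro _ ⟨ψ, -, rfl⟩; positivity)
          · exact hε x hx
  have hε_nonneg : 0 ≤ ε := hpost_nonneg.trans (hε x hx)
  calc ktilpost x = ∑ i, (φ i x - ∑ j, ξ x j * φ i (Xn j)) ^ 2 := by rw [hktilpost]
    _ ≤ (∑ i, sInf (S i)) * ε := by
        rw [Finset.sum_mul]
        exact Finset.sum_le_sum fun i _ => hresid i
    _ ≤ C₄ * ε := by
        rw [hC₄]
        gcongr
        simpa using Real.sum_le_card_mul_iSup fun i => sInf (S i)

/-- **Variance contraction for approximate posteriors.** If the basis functions `φ_i` of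
the standard normal Bayesian linear model `f̃` lie locally in the RKHS `H_k`
(with feature map `Kf`, so that `g(x) = ⟪g, Kf x⟫` and `k(x,x') = ⟪Kf x, Kf x'⟫`)
and the true noise-free posterior variance is at most `ε` on `X`, then the
pathwise-updated approximate posterior variance
`k^{(f̃|y)}(x,x) = ∑ᵢ (φᵢ(x) − ξ(x)ᵀφᵢ(X_n))²` is at most `C₄ ε` on `X`, where
`C₄ = ℓ · maxᵢ inf{‖ψᵢ‖² : ψᵢ|_X = φᵢ|_X}`. -/
theorem approximate_posterior_variance_contraction
    {M H : Type*} [TopologicalSpace M] [NormedAddCommGroup H] [InnerProductSpace ℝ H]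
    (X : Set M) (hX : IsCompact X)
    (Kf : M → H) (k : M → M → ℝ)
    (hker : ∀ x x', k x x' = (inner ℝ (Kf x) (Kf x') : ℝ))
    {ℓ n : ℕ} (φ : Fin ℓ → M → ℝ)
    (hloc : ∀ i, ∃ ψ : H, ∀ x ∈ X, (inner ℝ ψ (Kf x) : ℝ) = φ i x)
    (Xn : Fin n → M) (hXn : ∀ j, Xn j ∈ X)
    (K : Matrix (Fin n) (Fin n) ℝ) (hK : K = Matrix.of fun i j => k (Xn i) (Xn j))
    (hKdet : IsUnit K.det)
    (ξ : M → Fin n → ℝ) (hξ : ξ = fun x => K⁻¹.mulVec fun i => k (Xn i) x)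
    (kpost : M → ℝ)
    (hkpost : kpost = fun x => k x x - ∑ i, k x (Xn i) * ξ x i)
    (ktilpost : M → ℝ)
    (hktilpost : ktilpost = fun x => ∑ i, (φ i x - ∑ j, ξ x j * φ i (Xn j)) ^ 2)
    (C₄ : ℝ)
    (hC₄ : C₄ = (ℓ : ℝ) * ⨆ i : Fin ℓ,
      sInf {r : ℝ | ∃ ψ : H, (∀ x ∈ X, (inner ℝ ψ (Kf x) : ℝ) = φ i x) ∧ r = ‖ψ‖ ^ 2})
    (ε : ℝ) (hε : ∀ x ∈ X, kpost x ≤ ε) :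
    ∀ x ∈ X, ktilpost x ≤ C₄ * ε :=
  approximate_posterior_variance_contraction_general X Kf k hker φ hloc Xn hXn K hK hKdet ξ hξ kpost
    hkpost ktilpost hktilpost C₄ hC₄ ε hε
end

section
/- Under the assumptions of the variance contraction result, if sup_{x∈X} k^{(f|y)}(x,x) → 0 along a sequence of designs X_n, then sup_{x,x'∈X} |k^{(f̃|y)}(x,x') − k^{(f|y)}(x,x')| → 0. -/
open Matrix Filter

/-! Writing `r x = K_x - ∑ᵢ ξ(x)ᵢ K_{xᵢ}` for the residual of the kernel interpolant in the
feature space `H`, the true posterior kernel is the Gram kernel `⟪r x, r x'⟫`, and, since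
`φᵢ = ⟪ψᵢ, K_·⟫` on `X`, the approximate one is `∑ᵢ ⟪ψᵢ, r x⟫ ⟪ψᵢ, r x'⟫`. Cauchy–Schwarz
bounds their difference by `(∑ᵢ ‖ψᵢ‖² + 1) ‖r x‖ ‖r x'‖`, and
`‖r x‖ ‖r x'‖ ≤ sup_X ‖r‖² = sup_X k^{(f|y)}(x, x)`. -/

section InnerProduct

variable {ι H : Type*} [Fintype ι] [NormedAddCommGroup H] [InnerProductSpace ℝ H]

/-- The normal equations make the residual of `u'` orthogonal to every `v i`, so only one
cross term survives. -/
theorem real_inner_sub_sum_smul_of_normal_eq (u u' : H) (v : ι → H) (c c' : ι → ℝ)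
    (hc' : ∀ i, ∑ j, inner ℝ (v i) (v j) * c' j = inner ℝ (v i) u') :
    inner ℝ (u - ∑ i, c i • v i) (u' - ∑ i, c' i • v i)
      = inner ℝ u u' - ∑ i, inner ℝ u (v i) * c' i := by
  have hcross : inner ℝ (∑ i, c i • v i) (∑ j, c' j • v j) = ∑ i, c i * inner ℝ (v i) u' := by
    rw [sum_inner]
    refine Finset.sum_congr rfl fun i _ => ?_
    rw [real_inner_smul_left, inner_sum, ← hc']
    simp only [real_inner_smul_right, mul_comm (c' _)]
  rw [inner_sub_left, inner_sub_right, inner_sub_right, hcross]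
  simp only [inner_sum, sum_inner, real_inner_smul_left, real_inner_smul_right, mul_comm (c' _)]
  ring

theorem abs_real_inner_mul_real_inner_le (ψ a b : H) :
    |inner ℝ ψ a * inner ℝ ψ b| ≤ ‖ψ‖ ^ 2 * (‖a‖ * ‖b‖) := by
  rw [abs_mul]
  calc |inner ℝ ψ a| * |inner ℝ ψ b| ≤ (‖ψ‖ * ‖a‖) * (‖ψ‖ * ‖b‖) :=
        mul_le_mul (abs_real_inner_le_norm _ _) (abs_real_inner_le_norm _ _)
          (abs_nonneg _) (by positivity)
    _ = ‖ψ‖ ^ 2 * (‖a‖ * ‖b‖) := by ring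

theorem abs_sum_real_inner_mul_sub_real_inner_le (ψ : ι → H) (a b : H) :
    |∑ i, inner ℝ (ψ i) a * inner ℝ (ψ i) b - inner ℝ a b|
      ≤ (∑ i, ‖ψ i‖ ^ 2 + 1) * (‖a‖ * ‖b‖) := by
  calc |∑ i, inner ℝ (ψ i) a * inner ℝ (ψ i) b - inner ℝ a b|
      ≤ ∑ i, |inner ℝ (ψ i) a * inner ℝ (ψ i) b| + |inner ℝ a b| :=
        (abs_sub _ _).trans (add_le_add_left (Finset.abs_sum_le_sum_abs _ _) _)
    _ ≤ ∑ i, ‖ψ i‖ ^ 2 * (‖a‖ * ‖b‖) + ‖a‖ * ‖b‖ :=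
        add_le_add (Finset.sum_le_sum fun i _ => abs_real_inner_mul_real_inner_le _ _ _)
          (abs_real_inner_le_norm _ _)
    _ = (∑ i, ‖ψ i‖ ^ 2 + 1) * (‖a‖ * ‖b‖) := by rw [add_mul, Finset.sum_mul, one_mul]

end InnerProduct

theorem iSup_abs_le_mul_iSup_of_sq_eq {α : Type*} (g : α → α → ℝ) (s f : α → ℝ)
    (hsf : ∀ x, s x ^ 2 = f x) (hf : BddAbove (Set.range f)) {C : ℝ} (hC : 0 ≤ C)
    (hg : ∀ x y, |g x y| ≤ C * (s x * s y)) :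
    ⨆ p : α × α, |g p.1 p.2| ≤ C * ⨆ x, f x := by
  refine Real.iSup_le (fun p => (hg p.1 p.2).trans ?_)
    (mul_nonneg hC (Real.iSup_nonneg fun x => hsf x ▸ sq_nonneg _))
  have h₁ : s p.1 ^ 2 ≤ ⨆ x, f x := hsf p.1 ▸ le_ciSup hf p.1
  have h₂ : s p.2 ^ 2 ≤ ⨆ x, f x := hsf p.2 ▸ le_ciSup hf p.2
  exact mul_le_mul_of_nonneg_left (by nlinarith [sq_nonneg (s p.1 - s p.2)]) hC

theorem mulVec_nonsing_inv_mulVec {n α : Type*} [Fintype n] [DecidableEq n] [CommRing α]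
    (A : Matrix n n α) (hA : IsUnit A.det) (b : n → α) : A *ᵥ (A⁻¹ *ᵥ b) = b := by
  rw [mulVec_mulVec, mul_nonsing_inv _ hA, one_mulVec]

theorem posterior_kernel_uniform_convergence_general
    {M H : Type*} [TopologicalSpace M] [NormedAddCommGroup H] [InnerProductSpace ℝ H]
    (X : Set M) (hX : IsCompact X)
    (Kf : M → H) (k : M → M → ℝ)
    (hker : ∀ x x', k x x' = (inner ℝ (Kf x) (Kf x') : ℝ))
    (hkc : Continuous fun p : M × M => k p.1 p.2)
    {ℓ : ℕ} (φ : Fin ℓ → M → ℝ)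
    (hloc : ∀ i, ∃ ψ : H, ∀ x ∈ X, (inner ℝ ψ (Kf x) : ℝ) = φ i x)
    (nseq : ℕ → ℕ) (pts : ∀ N, Fin (nseq N) → M) (hpts : ∀ N j, pts N j ∈ X)
    (K : ∀ N, Matrix (Fin (nseq N)) (Fin (nseq N)) ℝ)
    (hK : ∀ N, K N = Matrix.of fun i j => k (pts N i) (pts N j))
    (hKdet : ∀ N, IsUnit (K N).det)
    (ξ : ∀ N, M → Fin (nseq N) → ℝ)
    (hξ : ∀ N, ξ N = fun x => (K N)⁻¹.mulVec fun i => k (pts N i) x)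
    (kpost : ℕ → M → M → ℝ)
    (hkpost : kpost = fun N x x' => k x x' - ∑ i, k x (pts N i) * ξ N x' i)
    (ktilpost : ℕ → M → M → ℝ)
    (hktilpost : ktilpost = fun N x x' =>
      ∑ i, (φ i x - ∑ j, ξ N x j * φ i (pts N j))
          * (φ i x' - ∑ j, ξ N x' j * φ i (pts N j)))
    (hcontract : Tendsto (fun N => ⨆ x : X, kpost N x x) atTop (nhds 0)) :
    Tendsto (fun N => ⨆ p : X × X, |ktilpost N p.1 p.2 - kpost N p.1 p.2|)
      atTop (nhds 0) := by
  choose ψ hψ using hloc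
  set r : ∀ N, M → H := fun N x => Kf x - ∑ i, ξ N x i • Kf (pts N i)
  have hkpost_inner N x x' : kpost N x x' = inner ℝ (r N x) (r N x') := by
    have hnormal i : ∑ j, inner ℝ (Kf (pts N i)) (Kf (pts N j)) * ξ N x' j
        = inner ℝ (Kf (pts N i)) (Kf x') := by
      simpa [← hker, hK, hξ, mulVec, dotProduct] using
        congrFun (mulVec_nonsing_inv_mulVec (K N) (hKdet N) fun i => k (pts N i) x') i
    simp only [r, real_inner_sub_sum_smul_of_normal_eq _ _ _ _ _ hnormal, hkpost, hker]
  have hktilpost_inner N : ∀ x ∈ X, ∀ x' ∈ X,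
      ktilpost N x x' = ∑ i, inner ℝ (ψ i) (r N x) * inner ℝ (ψ i) (r N x') := by
    intro x hx x' hx'
    rw [hktilpost]
    refine Finset.sum_congr rfl fun i _ => ?_
    simp only [r, inner_sub_right, inner_sum, real_inner_smul_right, hψ i _ hx, hψ i _ hx',
      hψ i _ (hpts N _)]
  have hbdd N : BddAbove (Set.range fun x : X => kpost N x x) := by
    have hcont : Continuous fun x => kpost N x x := by
      simp only [hkpost, hξ]
      fun_prop
    rw [← Set.image_eq_range (fun x => kpost N x x)]
    exact (hX.image_of_continuousOn hcont.continuousOn).bddAbove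
  have hbound N : ⨆ p : X × X, |ktilpost N p.1 p.2 - kpost N p.1 p.2|
      ≤ (∑ i, ‖ψ i‖ ^ 2 + 1) * ⨆ x : X, kpost N x x := by
    have hC : (0 : ℝ) ≤ ∑ i, ‖ψ i‖ ^ 2 + 1 := by positivity
    refine iSup_abs_le_mul_iSup_of_sq_eq (fun x x' : X => ktilpost N x x' - kpost N x x')
      (fun x => ‖r N x‖) _
      (fun x => by rw [hkpost_inner, real_inner_self_eq_norm_sq]) (hbdd N) hC fun x x' => ?_
    rw [hktilpost_inner N x x.2 x' x'.2, hkpost_inner]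
    exact abs_sum_real_inner_mul_sub_real_inner_le _ _ _
  refine tendsto_of_tendsto_of_tendsto_of_le_of_le tendsto_const_nhds ?_
    (fun N => Real.iSup_nonneg fun _ => abs_nonneg _) hbound
  simpa using hcontract.const_mul (∑ i, ‖ψ i‖ ^ 2 + 1)

/-- **Uniform convergence of approximate posterior kernels.** Under the variance
contraction assumptions (compact `X`, basis functions lying locally in `H_k`, standard
normal Bayesian linear model), if the true posterior variance converges uniformly to `0`
along a sequence of designs, then the approximate and true posterior kernels converge to
each other uniformly on `X × X`. -/
theorem posterior_kernel_uniform_convergence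
    {M H : Type*} [TopologicalSpace M] [NormedAddCommGroup H] [InnerProductSpace ℝ H]
    (X : Set M) (hX : IsCompact X)
    (Kf : M → H) (k : M → M → ℝ)
    (hker : ∀ x x', k x x' = (inner ℝ (Kf x) (Kf x') : ℝ))
    (hkc : Continuous fun p : M × M => k p.1 p.2)
    {ℓ : ℕ} (φ : Fin ℓ → M → ℝ) (hφc : ∀ i, Continuous (φ i))
    (hloc : ∀ i, ∃ ψ : H, ∀ x ∈ X, (inner ℝ ψ (Kf x) : ℝ) = φ i x)
    (nseq : ℕ → ℕ) (pts : ∀ N, Fin (nseq N) → M) (hpts : ∀ N j, pts N j ∈ X)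
    (K : ∀ N, Matrix (Fin (nseq N)) (Fin (nseq N)) ℝ)
    (hK : ∀ N, K N = Matrix.of fun i j => k (pts N i) (pts N j))
    (hKdet : ∀ N, IsUnit (K N).det)
    (ξ : ∀ N, M → Fin (nseq N) → ℝ)
    (hξ : ∀ N, ξ N = fun x => (K N)⁻¹.mulVec fun i => k (pts N i) x)
    (kpost : ℕ → M → M → ℝ)
    (hkpost : kpost = fun N x x' => k x x' - ∑ i, k x (pts N i) * ξ N x' i)
    (ktilpost : ℕ → M → M → ℝ)
    (hktilpost : ktilpost = fun N x x' =>
      ∑ i, (φ i x - ∑ j, ξ N x j * φ i (pts N j))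
          * (φ i x' - ∑ j, ξ N x' j * φ i (pts N j)))
    (hcontract : Tendsto (fun N => ⨆ x : X, kpost N x x) atTop (nhds 0)) :
    Tendsto (fun N => ⨆ p : X × X, |ktilpost N p.1 p.2 - kpost N p.1 p.2|)
      atTop (nhds 0) :=
  posterior_kernel_uniform_convergence_general X hX Kf k hker hkc φ hloc nseq pts hpts K hK hKdet ξ
    hξ kpost hkpost ktilpost hktilpost hcontract
end

section
/- Let f̃ ~ GP(0, δ) where δ is the Kronecker delta kernel (δ(x,x') = 1 if x = x', 0 otherwise). For test points X_* disjoint from training points X_n, the covariance of the pathwise-updated vector f̃(X_*) + k(X_*,X_n)K_{n,n}⁻¹(y − f̃(X_n)) equals I + K_{*,n} K_{n,n}⁻² K_{n,*}; in particular every diagonal entry (posterior variance) is at least 1. -/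
/-! The centred update is `U - 𝔼U = B ξ`, where `ξ` stacks the prior values at `X_*` and at `X_n`
and `B = [I | -A]` with `A = K_{*,n} K⁻¹`. The points of `X_*` and `X_n` are pairwise distinct, so
under the Kronecker-delta prior `ξ` is an orthonormal family and the covariance is
`B Bᵀ = I + A Aᵀ`; symmetry of `K` turns `A Aᵀ` into `K_{*,n} K⁻² K_{n,*}`, a positive
semidefinite matrix, so no variance drops below `1`. -/

open MeasureTheory Matrix

section SecondMoments

variable {Ω ι κ κ' : Type*} [MeasurableSpace Ω] {P : Measure Ω} [Fintype ι]

theorem integrable_mulVec_apply {g : ι → Ω → ℝ} (hg : ∀ a, Integrable (g a) P)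
    (B : Matrix κ ι ℝ) (i : κ) : Integrable (fun ω => (B *ᵥ fun a => g a ω) i) P := by
  simp only [mulVec, dotProduct]
  exact integrable_finsetSum _ fun a _ => (hg a).const_mul _

theorem integral_mulVec_apply {g : ι → Ω → ℝ} (hg : ∀ a, Integrable (g a) P)
    (B : Matrix κ ι ℝ) (i : κ) :
    ∫ ω, (B *ᵥ fun a => g a ω) i ∂P = (B *ᵥ fun a => ∫ ω, g a ω ∂P) i := by
  simp only [mulVec, dotProduct]
  rw [integral_finsetSum _ fun a _ => (hg a).const_mul _]
  simp only [integral_const_mul]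

theorem integral_mulVec_mul_mulVec_apply {g : ι → Ω → ℝ}
    (hg : ∀ a b, Integrable (fun ω => g a ω * g b ω) P)
    (B : Matrix κ ι ℝ) (C : Matrix κ' ι ℝ) (i : κ) (j : κ') :
    ∫ ω, (B *ᵥ fun a => g a ω) i * (C *ᵥ fun a => g a ω) j ∂P
      = (B * (of fun a b => ∫ ω, g a ω * g b ω ∂P) * Cᵀ) i j := by
  have hexpand : ∀ ω, (B *ᵥ fun a => g a ω) i * (C *ᵥ fun a => g a ω) j
      = ∑ a, ∑ b, B i a * C j b * (g a ω * g b ω) := fun ω => by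
    simp only [mulVec, dotProduct, Finset.sum_mul_sum]
    exact Finset.sum_congr rfl fun a _ => Finset.sum_congr rfl fun b _ => by ring
  simp only [hexpand]
  rw [integral_finsetSum _ fun a _ =>
    integrable_finsetSum _ fun b _ => (hg a b).const_mul _]
  simp only [mul_apply, transpose_apply, of_apply, Finset.sum_mul]
  rw [Finset.sum_comm]
  refine Finset.sum_congr rfl fun a _ => ?_
  rw [integral_finsetSum _ fun b _ => (hg a b).const_mul _]
  exact Finset.sum_congr rfl fun b _ => by rw [integral_const_mul]; ring

end SecondMoments

section PathwiseUpdate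

variable {R m n : Type*} [Fintype m] [DecidableEq m] [Fintype n]

theorem add_mulVec_sub_eq_mulVec_add_fromCols_mulVec_sumElim [CommRing R]
    (A : Matrix m n R) (u : m → R) (v y : n → R) :
    u + A *ᵥ (y - v) = A *ᵥ y + fromCols 1 (-A) *ᵥ Sum.elim u v := by
  rw [fromCols_mulVec_sumElim, one_mulVec, neg_mulVec, mulVec_sub]
  abel

theorem fromCols_one_neg_mul_transpose_self [CommRing R] (A : Matrix m n R) :
    fromCols (1 : Matrix m m R) (-A) * (fromCols (1 : Matrix m m R) (-A))ᵀ = 1 + A * Aᵀ := by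
  rw [transpose_fromCols, fromCols_mul_fromRows]
  simp

theorem one_le_one_add_mul_transpose_self_apply (A : Matrix m n ℝ) (i : m) :
    1 ≤ ((1 : Matrix m m ℝ) + A * Aᵀ) i i := by
  simpa using (posSemidef_self_mul_conjTranspose A).diag_nonneg (i := i)

end PathwiseUpdate

theorem mul_inv_mul_transpose_of_isSymm {R m n : Type*} [CommRing R] [Fintype n] [DecidableEq n]
    (A : Matrix m n R) {K : Matrix n n R} (hK : K.IsSymm) :
    A * K⁻¹ * (A * K⁻¹)ᵀ = A * K⁻¹ * K⁻¹ * Aᵀ := by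
  simp only [transpose_mul, hK.inv.eq, Matrix.mul_assoc]

theorem kronecker_delta_prior_no_contraction_general
    {M : Type*} [DecidableEq M]
    {Ω : Type*} [MeasurableSpace Ω] (P : Measure Ω) [IsProbabilityMeasure P]
    (ftil : M → Ω → ℝ)
    (hint1 : ∀ x, Integrable (ftil x) P)
    (hint2 : ∀ x x', Integrable (fun ω => ftil x ω * ftil x' ω) P)
    (hcen : ∀ x, ∫ ω, ftil x ω ∂P = 0)
    (hdelta : ∀ x x', ∫ ω, ftil x ω * ftil x' ω ∂P = if x = x' then (1 : ℝ) else 0)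
    (k : M → M → ℝ) (hksymm : ∀ x x', k x x' = k x' x)
    {n s : ℕ} (Xn : Fin n → M) (Xs : Fin s → M)
    (hXn : Function.Injective Xn) (hXs : Function.Injective Xs)
    (hdisj : ∀ i j, Xs i ≠ Xn j)
    (K : Matrix (Fin n) (Fin n) ℝ) (hK : K = Matrix.of fun i j => k (Xn i) (Xn j))
    (Ksn : Matrix (Fin s) (Fin n) ℝ)
    (y : Fin n → ℝ)
    (U : Ω → Fin s → ℝ)
    (hU : U = fun ω => (fun i => ftil (Xs i) ω)
        + (Ksn * K⁻¹).mulVec (y - fun j => ftil (Xn j) ω))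
    (mU : Fin s → ℝ) (hmU : mU = fun i => ∫ ω, U ω i ∂P) :
    (Matrix.of fun i j => ∫ ω, (U ω i - mU i) * (U ω j - mU j) ∂P)
        = (1 : Matrix (Fin s) (Fin s) ℝ) + Ksn * K⁻¹ * K⁻¹ * Ksnᵀ
    ∧ ∀ i, (1 : ℝ) ≤ ∫ ω, (U ω i - mU i) ^ 2 ∂P := by
  set A := Ksn * K⁻¹
  set B := fromCols (1 : Matrix (Fin s) (Fin s) ℝ) (-A)
  set g : Fin s ⊕ Fin n → Ω → ℝ := fun a => ftil (Sum.elim Xs Xn a)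
  have hUg : ∀ ω, U ω = A *ᵥ y + B *ᵥ fun a => g a ω := fun ω => by
    rw [hU]
    dsimp only
    rw [add_mulVec_sub_eq_mulVec_add_fromCols_mulVec_sumElim]
    congr 2
    ext (a | a) <;> rfl
  have hmean : mU = A *ᵥ y := by
    ext i
    simp only [hmU, hUg, Pi.add_apply]
    rw [integral_add (integrable_const _) (integrable_mulVec_apply (fun a => hint1 _) B i),
      integral_mulVec_apply fun a => hint1 _]
    simp [hcen, ← Pi.zero_def]
  have hcentered : ∀ ω i, U ω i - mU i = (B *ᵥ fun a => g a ω) i := by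
    simp [hUg, hmean]
  have hmoment : (of fun a b => ∫ ω, g a ω * g b ω ∂P) = 1 := by
    ext a b
    simp [g, hdelta, (hXs.sumElim hXn hdisj).eq_iff, one_apply]
  have hcov : (of fun i j => ∫ ω, (U ω i - mU i) * (U ω j - mU j) ∂P) = 1 + A * Aᵀ := by
    ext i j
    simp only [hcentered, of_apply]
    rw [integral_mulVec_mul_mulVec_apply fun a b => hint2 _ _, hmoment, Matrix.mul_one,
      fromCols_one_neg_mul_transpose_self]
  have hKsymm : K.IsSymm := IsSymm.ext fun i j => by simp [hK, hksymm]
  refine ⟨by rw [hcov, mul_inv_mul_transpose_of_isSymm _ hKsymm], fun i => ?_⟩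
  have hvar := one_le_one_add_mul_transpose_self_apply A i
  rw [← hcov, of_apply] at hvar
  simpa only [sq] using hvar

/-- **Misspecified prior counterexample.** If `f̃ ~ GP(0, δ)` has the Kronecker delta
kernel (independent standard normal values at distinct points), and the test points `X_*`
are disjoint from the training points `X_n`, then the covariance of the pathwise-updated
vector `f̃(X_*) + K_{*,n}K⁻¹(y − f̃(X_n))` equals `I + K_{*,n} K⁻² K_{n,*}`; in particular
every posterior variance is at least `1`. -/
theorem kronecker_delta_prior_no_contraction
    {M : Type*} [DecidableEq M]
    {Ω : Type*} [MeasurableSpace Ω] (P : Measure Ω) [IsProbabilityMeasure P]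
    (ftil : M → Ω → ℝ)
    (hint1 : ∀ x, Integrable (ftil x) P)
    (hint2 : ∀ x x', Integrable (fun ω => ftil x ω * ftil x' ω) P)
    (hcen : ∀ x, ∫ ω, ftil x ω ∂P = 0)
    (hdelta : ∀ x x', ∫ ω, ftil x ω * ftil x' ω ∂P = if x = x' then (1 : ℝ) else 0)
    (k : M → M → ℝ) (hksymm : ∀ x x', k x x' = k x' x)
    {n s : ℕ} (Xn : Fin n → M) (Xs : Fin s → M)
    (hXn : Function.Injective Xn) (hXs : Function.Injective Xs)
    (hdisj : ∀ i j, Xs i ≠ Xn j)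
    (K : Matrix (Fin n) (Fin n) ℝ) (hK : K = Matrix.of fun i j => k (Xn i) (Xn j))
    (hKdet : IsUnit K.det)
    (Ksn : Matrix (Fin s) (Fin n) ℝ) (hKsn : Ksn = Matrix.of fun i j => k (Xs i) (Xn j))
    (y : Fin n → ℝ)
    (U : Ω → Fin s → ℝ)
    (hU : U = fun ω => (fun i => ftil (Xs i) ω)
        + (Ksn * K⁻¹).mulVec (y - fun j => ftil (Xn j) ω))
    (mU : Fin s → ℝ) (hmU : mU = fun i => ∫ ω, U ω i ∂P) :
    (Matrix.of fun i j => ∫ ω, (U ω i - mU i) * (U ω j - mU j) ∂P)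
        = (1 : Matrix (Fin s) (Fin s) ℝ) + Ksn * K⁻¹ * K⁻¹ * Ksnᵀ
    ∧ ∀ i, (1 : ℝ) ≤ ∫ ω, (U ω i - mU i) ^ 2 ∂P :=
  kronecker_delta_prior_no_contraction_general P ftil hint1 hint2 hcen hdelta k hksymm Xn Xs hXn hXs
    hdisj K hK Ksn y U hU mU hmU
end
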